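/- In ℚ⁷ with eᵢ = εᵢ − (1/7)∑ⱼεⱼ, the set S = {e₁+e₂, e₂+e₃, e₁+e₃, e₂+e₄, e₂+e₅, e₃+e₆, e₃+e₇} is not saturated: the vector v = e₁+e₂+e₃ satisfies v = (1/2)((e₁+e₂)+(e₂+e₃)+(e₁+e₃)) and v = −(e₄+e₅+e₆+e₇) = 2(e₂+e₃) − (e₂+e₄) − (e₂+e₅) − (e₃+e₆) − (e₃+e₇), yet v is not a nonnegative-integer combination of elements of S. -/
import Mathlib


/-- The quasi-basis vectors `eᵢ = εᵢ − (1/7)∑ⱼ εⱼ` in `ℚ⁷`; they satisfy `∑ᵢ eᵢ = 0`. -/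
def e (i : Fin 7) : Fin 7 → ℚ :=
  fun j => (if j = i then 1 else 0) - 1 / 7

/-- The seven vectors of the non-saturated subset
`S = {e₁+e₂, e₂+e₃, e₁+e₃, e₂+e₄, e₂+e₅, e₃+e₆, e₃+e₇}` (0-indexed). -/
def w : Fin 7 → (Fin 7 → ℚ) :=
  ![e 0 + e 1, e 1 + e 2, e 0 + e 2, e 1 + e 3, e 1 + e 4, e 2 + e 5, e 2 + e 6]


lemma w0 : w 0 = e 0 + e 1 := rfl
lemma w1 : w 1 = e 1 + e 2 := rfl
lemma w2 : w 2 = e 0 + e 2 := rfl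
lemma w3 : w 3 = e 1 + e 3 := rfl
lemma w4 : w 4 = e 1 + e 4 := rfl
lemma w5 : w 5 = e 2 + e 5 := rfl
lemma w6 : w 6 = e 2 + e 6 := rfl

/-- The set `S` is not saturated: `v = e₁+e₂+e₃` is a nonnegative-rational combination
and an integer combination of the elements of `S`, and `v = −(e₄+e₅+e₆+e₇)`, but `v` is
not a nonnegative-integer combination of the elements of `S`. -/
theorem sl7_lambda2_NSS :
    e 0 + e 1 + e 2 = ((1:ℚ)/2) • (w 0 + w 1 + w 2) ∧
    e 0 + e 1 + e 2 = -(e 3 + e 4 + e 5 + e 6) ∧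
    e 0 + e 1 + e 2 = (2:ℚ) • w 1 - w 3 - w 4 - w 5 - w 6 ∧
    ¬ ∃ m : Fin 7 → ℕ, e 0 + e 1 + e 2 = ∑ i, (m i : ℚ) • w i := by
  refine ⟨?_, ?_, ?_, ?_⟩
  · funext j; fin_cases j <;> simp [e, w0, w1, w2, w3, w4, w5, w6] <;> norm_num
  · funext j; fin_cases j <;> simp [e, w0, w1, w2, w3, w4, w5, w6] <;> norm_num
  · funext j; fin_cases j <;> simp [e, w0, w1, w2, w3, w4, w5, w6] <;> norm_num
  · rintro ⟨m, hm⟩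
    have h : ∀ j, (e 0 + e 1 + e 2) j = ∑ i, (m i : ℚ) * w i j := by
      intro j
      have := congrFun hm j
      simpa [Finset.sum_apply] using this
    have h0 := h 0
    have h1 := h 1
    have h2 := h 2
    have h3 := h 3
    have h4 := h 4
    have h5 := h 5
    have h6 := h 6
    simp [e, w0, w1, w2, w3, w4, w5, w6, Fin.sum_univ_seven] at h0 h1 h2 h3 h4 h5 h6
    have e1 : (m 0 : ℚ) + m 2 = m 3 + 1 := by linear_combination h3 - h0
    have e2 : (m 0 : ℚ) + m 1 + m 4 = 1 := by linear_combination h3 - h1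
    have e3 : (m 1 : ℚ) + m 2 + m 5 + m 6 = m 3 + 1 := by linear_combination h3 - h2
    have e4 : (m 4 : ℚ) = m 3 := by linear_combination h3 - h4
    have e5 : (m 5 : ℚ) = m 3 := by linear_combination h3 - h5
    have e6 : (m 6 : ℚ) = m 3 := by linear_combination h3 - h6
    have n1 : m 0 + m 2 = m 3 + 1 := by exact_mod_cast e1
    have n2 : m 0 + m 1 + m 4 = 1 := by exact_mod_cast e2
    have n3 : m 1 + m 2 + m 5 + m 6 = m 3 + 1 := by exact_mod_cast e3
    have n4 : m 4 = m 3 := by exact_mod_cast e4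
    have n5 : m 5 = m 3 := by exact_mod_cast e5
    have n6 : m 6 = m 3 := by exact_mod_cast e6
    omega
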